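/- arXiv:2509.23222 — 9 statements merged into one kernel-verified Lean document; each statement's English description precedes it below -/
import Mathlib

section
/- Let R ⊆ ℝ² be a nonempty, closed, convex set contained in the nonnegative orthant such that whenever (a,b) ∈ R and (a',b') satisfies a' ≥ a ≥ 0 and b' ≥ b ≥ 0, then (a',b') ∈ R. Then: (i) for every q > 0 the function (a,b) ↦ q·a + b attains its minimum over R; and (ii) if x, y : (0,∞) → ℝ are such that for every q > 0 the point (x(q), y(q)) belongs to R and minimizes (a,b) ↦ q·a + b over R, then x is nonincreasing on (0,∞), y is nondecreasing on (0,∞), and q·x(q) + y(q) ≤ q·x(p) + y(p) for all p, q > 0. -/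
/-- For a reachable set `R` (nonempty, closed, convex, contained in the
nonnegative orthant, and an upper set within the orthant):
(i) for every price `q > 0` the linear objective `(a,b) ↦ q·a + b` attains its minimum on `R`;
(ii) any selectors `(x(q), y(q))` of the argmin have `x` nonincreasing, `y` nondecreasing,
and satisfy the cross-minimality inequality `q·x(q) + y(q) ≤ q·x(p) + y(p)`. -/
theorem amm_selectors_exist_and_monotone (R : Set (ℝ × ℝ))
    (hne : R.Nonempty) (hcl : IsClosed R) (hconv : Convex ℝ R)
    (horth : R ⊆ {p : ℝ × ℝ | 0 ≤ p.1 ∧ 0 ≤ p.2})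
    (hup : ∀ a b a' b' : ℝ, (a, b) ∈ R → a ≤ a' → b ≤ b' → (a', b') ∈ R) :
    (∀ q : ℝ, 0 < q → ∃ p ∈ R, ∀ p' ∈ R, q * p.1 + p.2 ≤ q * p'.1 + p'.2) ∧
    (∀ x y : ℝ → ℝ,
      (∀ q : ℝ, 0 < q →
        (x q, y q) ∈ R ∧ ∀ p' ∈ R, q * x q + y q ≤ q * p'.1 + p'.2) →
      AntitoneOn x (Set.Ioi (0 : ℝ)) ∧ MonotoneOn y (Set.Ioi (0 : ℝ)) ∧
        ∀ p q : ℝ, 0 < p → 0 < q → q * x q + y q ≤ q * x p + y p) := by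
  constructor
  · intro q hq
    obtain ⟨p₀, hp₀⟩ := hne
    set c := q * p₀.1 + p₀.2 with hc
    set S := R ∩ {p : ℝ × ℝ | q * p.1 + p.2 ≤ c} with hS
    have hmem : p₀ ∈ S := ⟨hp₀, by simp only [Set.mem_setOf_eq, hc]; exact le_rfl⟩
    have hSne : S.Nonempty := ⟨p₀, hmem⟩
    have hScl : IsClosed S :=
      hcl.inter (isClosed_le (by continuity) continuous_const)
    have hSsub : S ⊆ Set.Icc ((0 : ℝ), (0 : ℝ)) (c / q, c) := by
      rintro ⟨a, b⟩ ⟨hR, hle⟩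
      obtain ⟨ha, hb⟩ := horth hR
      simp only [Set.mem_setOf_eq] at hle
      refine ⟨⟨ha, hb⟩, ?_, ?_⟩
      · rw [le_div_iff₀ hq]; nlinarith
      · nlinarith
    have hScomp : IsCompact S := isCompact_Icc.of_isClosed_subset hScl hSsub
    obtain ⟨p, hpS, hmin⟩ := hScomp.exists_isMinOn hSne
      (((continuous_const.mul continuous_fst).add continuous_snd).continuousOn :
        ContinuousOn (fun p : ℝ × ℝ => q * p.1 + p.2) S)
    refine ⟨p, hpS.1, fun p' hp' => ?_⟩
    by_cases h : q * p'.1 + p'.2 ≤ c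
    · exact hmin ⟨hp', h⟩
    · exact le_trans (hmin hmem) (le_of_not_ge h)
  · intro x y hxy
    have key : ∀ p q : ℝ, 0 < p → 0 < q → q * x q + y q ≤ q * x p + y p := by
      intro p q hp hq
      exact (hxy q hq).2 (x p, y p) (hxy p hp).1
    have hx : AntitoneOn x (Set.Ioi 0) := by
      intro p hp q hq hpq
      rcases eq_or_lt_of_le hpq with h | h
      · rw [h]
      · have h1 := key p q (Set.mem_Ioi.mp hp) (Set.mem_Ioi.mp hq)
        have h2 := key q p (Set.mem_Ioi.mp hq) (Set.mem_Ioi.mp hp)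
        nlinarith
    refine ⟨hx, ?_, key⟩
    intro p hp q hq hpq
    have h2 := key q p (Set.mem_Ioi.mp hq) (Set.mem_Ioi.mp hp)
    have hxq := hx hp hq hpq
    nlinarith [Set.mem_Ioi.mp hp]
end

section
/- Let x : (0,∞) → ℝ and y : (0,∞) → ℝ be nonnegative functions satisfying q·x(q) + y(q) ≤ q·x(p) + y(p) for all p, q > 0. Define R = {(a,b) ∈ ℝ² : a ≥ 0, b ≥ 0, and q·a + b ≥ q·x(q) + y(q) for every q > 0}. Then R is closed, convex, contains (x(q), y(q)) for every q > 0 (in particular R is nonempty), and R is an upper set within the nonnegative orthant: if (a,b) ∈ R, a' ≥ a ≥ 0 and b' ≥ b ≥ 0, then (a',b') ∈ R. -/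
/-- Given nonnegative portfolio update functions `x, y` on `(0,∞)` satisfying
the cross-minimality condition, the set
`R = {(a,b) ∈ ℝ²₊ : q·a + b ≥ q·x(q) + y(q) for all q > 0}`
is closed, convex, contains `(x(q), y(q))` for every `q > 0` (hence is nonempty), and is
an upper set within the nonnegative orthant. -/
theorem reachable_set_of_portfolio_updates (x y : ℝ → ℝ)
    (hx : ∀ q : ℝ, 0 < q → 0 ≤ x q) (hy : ∀ q : ℝ, 0 < q → 0 ≤ y q)
    (hmin : ∀ p q : ℝ, 0 < p → 0 < q → q * x q + y q ≤ q * x p + y p) :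
    let R : Set (ℝ × ℝ) :=
      {ab : ℝ × ℝ | 0 ≤ ab.1 ∧ 0 ≤ ab.2 ∧
        ∀ q : ℝ, 0 < q → q * x q + y q ≤ q * ab.1 + ab.2}
    IsClosed R ∧ Convex ℝ R ∧ (∀ q : ℝ, 0 < q → (x q, y q) ∈ R) ∧ R.Nonempty ∧
      ∀ a b a' b' : ℝ, (a, b) ∈ R → a ≤ a' → b ≤ b' → (a', b') ∈ R := by
  intro R
  have hRset : R = {ab : ℝ × ℝ | 0 ≤ ab.1} ∩ {ab : ℝ × ℝ | 0 ≤ ab.2} ∩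
      ⋂ q ∈ Set.Ioi (0:ℝ), {ab : ℝ × ℝ | q * x q + y q ≤ q * ab.1 + ab.2} := by
    ext ab
    simp only [R, Set.mem_setOf_eq, Set.mem_inter_iff, Set.mem_iInter, Set.mem_Ioi]
    tauto
  refine ⟨?_, ?_, ?_, ?_, ?_⟩
  · rw [hRset]
    refine ((isClosed_le continuous_const continuous_fst).inter
      (isClosed_le continuous_const continuous_snd)).inter
      (isClosed_biInter fun q _ => ?_)
    exact isClosed_le continuous_const
      (((continuous_const.mul continuous_fst).add continuous_snd))
  · rw [hRset]
    refine (((convex_halfSpace_ge (LinearMap.isLinear (LinearMap.fst ℝ ℝ ℝ)) 0).inter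
      (convex_halfSpace_ge (LinearMap.isLinear (LinearMap.snd ℝ ℝ ℝ)) 0)).inter
      (convex_iInter₂ fun q _ => ?_))
    have : IsLinearMap ℝ (fun ab : ℝ × ℝ => q * ab.1 + ab.2) := by
      constructor
      · intro a b; simp; ring
      · intro c a; simp; ring
    exact convex_halfSpace_ge this (q * x q + y q)
  · intro q hq
    exact ⟨hx q hq, hy q hq, fun p hp => hmin q p hq hp⟩
  · exact ⟨(x 1, y 1), hx 1 one_pos, hy 1 one_pos, fun p hp => hmin 1 p one_pos hp⟩
  · rintro a b a' b' ⟨ha, hb, h⟩ haa hbb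
    refine ⟨le_trans ha haa, le_trans hb hbb, fun q hq => ?_⟩
    calc q * x q + y q ≤ q * a + b := h q hq
      _ ≤ q * a' + b' := by
          have := mul_le_mul_of_nonneg_left haa hq.le
          linarith
end

section
/- Let x, y : (0,∞) → ℝ be differentiable functions such that for every q > 0: x'(q) ≤ 0, y'(q) ≥ 0, and q·x'(q) + y'(q) = 0. Then for all q, p > 0 one has q·x(q) + y(q) ≤ q·x(p) + y(p); that is, for every q > 0 the point (x(q), y(q)) minimizes p ↦ q·x(p) + y(p) over (0,∞). -/
/-- If `x, y` are differentiable on `(0,∞)` with `x'(q) ≤ 0`, `y'(q) ≥ 0`, and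
`q·x'(q) + y'(q) = 0` for all `q > 0`, then for all `q, p > 0` one has
`q·x(q) + y(q) ≤ q·x(p) + y(p)`, i.e. `(x(q), y(q))` minimizes `p ↦ q·x(p) + y(p)`. -/
theorem first_order_conditions_imply_global_min (x y x' y' : ℝ → ℝ)
    (hdx : ∀ q : ℝ, 0 < q → HasDerivAt x (x' q) q)
    (hdy : ∀ q : ℝ, 0 < q → HasDerivAt y (y' q) q)
    (hx' : ∀ q : ℝ, 0 < q → x' q ≤ 0)
    (hy' : ∀ q : ℝ, 0 < q → 0 ≤ y' q)
    (hfoc : ∀ q : ℝ, 0 < q → q * x' q + y' q = 0) :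
    ∀ q p : ℝ, 0 < q → 0 < p → q * x q + y q ≤ q * x p + y p := by
  intro q p hq hp
  set g : ℝ → ℝ := fun t => q * x t + y t with hg
  have hderiv : ∀ t : ℝ, 0 < t → HasDerivAt g ((q - t) * x' t) t := by
    intro t ht
    have h := ((hdx t ht).const_mul q).add (hdy t ht)
    have : q * x' t + y' t = (q - t) * x' t := by
      have := hfoc t ht
      nlinarith
    rwa [this] at h
  have hcont : ∀ s : Set ℝ, s ⊆ Set.Ioi (0:ℝ) → ContinuousOn g s := by
    intro s hs
    exact fun t hts => ((hderiv t (hs hts)).continuousAt).continuousWithinAt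
  rcases le_or_gt q p with hqp | hqp
  · -- g monotone on [q, p]
    have hsub : Set.Icc q p ⊆ Set.Ioi (0:ℝ) := fun t ht => lt_of_lt_of_le hq ht.1
    have hmono : MonotoneOn g (Set.Icc q p) := by
      apply monotoneOn_of_deriv_nonneg (convex_Icc q p) (hcont _ hsub)
      · intro t ht
        rw [interior_Icc] at ht
        exact ((hderiv t (lt_trans hq ht.1)).differentiableAt).differentiableWithinAt
      intro t ht
      rw [interior_Icc] at ht
      have ht0 : 0 < t := lt_trans hq ht.1
      rw [(hderiv t ht0).deriv]
      nlinarith [hx' t ht0, ht.1]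
    exact hmono (Set.left_mem_Icc.mpr hqp) (Set.right_mem_Icc.mpr hqp) hqp
  · -- g antitone on [p, q]
    have hsub : Set.Icc p q ⊆ Set.Ioi (0:ℝ) := fun t ht => lt_of_lt_of_le hp ht.1
    have hanti : AntitoneOn g (Set.Icc p q) := by
      apply antitoneOn_of_deriv_nonpos (convex_Icc p q) (hcont _ hsub)
      · intro t ht
        rw [interior_Icc] at ht
        exact ((hderiv t (lt_trans hp ht.1)).differentiableAt).differentiableWithinAt
      intro t ht
      rw [interior_Icc] at ht
      have ht0 : 0 < t := lt_trans hp ht.1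
      rw [(hderiv t ht0).deriv]
      exact mul_nonpos_of_nonneg_of_nonpos (by linarith [ht.2]) (hx' t ht0)
    exact hanti (Set.left_mem_Icc.mpr hqp.le) (Set.right_mem_Icc.mpr hqp.le) hqp.le
end

section
/- Let x, y : (0,∞) → ℝ be differentiable with x nonincreasing and y'(q) = −q·x'(q) for every q > 0, and let q₀ > 0 be fixed. Define the divergence loss g(q) := (q·x(q₀) + y(q₀)) − (q·x(q) + y(q)) for q > 0. Then g is convex on (0,∞), g is nonincreasing on (0, q₀], g is nondecreasing on [q₀, ∞), g(q₀) = 0, and g(q) ≥ 0 for every q > 0. -/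
/-- For differentiable portfolio update functions with `x` nonincreasing and
`y'(q) = -q·x'(q)`, and a reference price `q₀ > 0`, the divergence loss
`g(q) = (q·x(q₀) + y(q₀)) − (q·x(q) + y(q))` is convex on `(0,∞)`, nonincreasing on
`(0, q₀]`, nondecreasing on `[q₀, ∞)`, vanishes at `q₀`, and is nonnegative on `(0,∞)`. -/
theorem divergence_loss_properties (x y x' y' : ℝ → ℝ)
    (hdx : ∀ q : ℝ, 0 < q → HasDerivAt x (x' q) q)
    (hdy : ∀ q : ℝ, 0 < q → HasDerivAt y (y' q) q)
    (hxanti : AntitoneOn x (Set.Ioi (0 : ℝ)))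
    (hy' : ∀ q : ℝ, 0 < q → y' q = -q * x' q)
    (q₀ : ℝ) (hq₀ : 0 < q₀) :
    let g : ℝ → ℝ := fun q => (q * x q₀ + y q₀) - (q * x q + y q)
    ConvexOn ℝ (Set.Ioi (0 : ℝ)) g ∧
    AntitoneOn g (Set.Ioc (0 : ℝ) q₀) ∧
    MonotoneOn g (Set.Ici q₀) ∧
    g q₀ = 0 ∧
    ∀ q : ℝ, 0 < q → 0 ≤ g q := by
  intro g
  have hg : ∀ q : ℝ, 0 < q → HasDerivAt g (x q₀ - x q) q := by
    intro q hq
    have h1 : HasDerivAt (fun q : ℝ => q * x q₀ + y q₀)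
        (x q₀) q := by
      simpa using ((hasDerivAt_id q).mul_const (x q₀)).add_const (y q₀)
    have h2 : HasDerivAt (fun q => q * x q + y q)
        (1 * x q + q * x' q + y' q) q :=
      ((hasDerivAt_id q).mul (hdx q hq)).add (hdy q hq)
    have := h1.sub h2
    have hEq : x q₀ - (1 * x q + q * x' q + y' q) = x q₀ - x q := by
      rw [hy' q hq]; ring
    rw [hEq] at this
    exact this
  have hderiv : ∀ q : ℝ, 0 < q → deriv g q = x q₀ - x q := fun q hq => (hg q hq).deriv
  have hdiff : ∀ q : ℝ, 0 < q → DifferentiableAt ℝ g q :=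
    fun q hq => (hg q hq).differentiableAt
  have hcont : ContinuousOn g (Set.Ioi 0) :=
    fun q hq => (hdiff q hq).continuousAt.continuousWithinAt
  have hconv : ConvexOn ℝ (Set.Ioi (0 : ℝ)) g := by
    apply MonotoneOn.convexOn_of_deriv (convex_Ioi 0) hcont
    · intro q hq
      rw [interior_Ioi] at hq
      exact (hdiff q hq).differentiableWithinAt
    · rw [interior_Ioi]
      intro a ha b hb hab
      rw [hderiv a ha, hderiv b hb]
      have := hxanti ha hb hab
      linarith
  have hanti : AntitoneOn g (Set.Ioc (0 : ℝ) q₀) := by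
    apply AntitoneOn.mono (antitoneOn_of_deriv_nonpos (convex_Ioc 0 q₀) ?_ ?_ ?_) le_rfl
    · exact hcont.mono (Set.Ioc_subset_Ioi_self)
    · intro q hq
      rw [interior_Ioc] at hq
      exact (hdiff q hq.1).differentiableWithinAt
    · intro q hq
      rw [interior_Ioc] at hq
      rw [hderiv q hq.1]
      have := hxanti (Set.mem_Ioi.mpr hq.1) (Set.mem_Ioi.mpr hq₀) hq.2.le
      linarith
  have hmono : MonotoneOn g (Set.Ici q₀) := by
    apply monotoneOn_of_deriv_nonneg (convex_Ici q₀)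
    · exact hcont.mono (fun q hq => lt_of_lt_of_le hq₀ hq)
    · intro q hq
      rw [interior_Ici] at hq
      exact (hdiff q (hq₀.trans hq)).differentiableWithinAt
    · intro q hq
      rw [interior_Ici] at hq
      rw [hderiv q (hq₀.trans hq)]
      have := hxanti (Set.mem_Ioi.mpr hq₀) (Set.mem_Ioi.mpr (hq₀.trans hq)) hq.le
      linarith
  have hzero : g q₀ = 0 := by simp [g]
  refine ⟨hconv, hanti, hmono, hzero, fun q hq => ?_⟩
  rcases le_total q q₀ with h | h
  · have := hanti ⟨hq, h⟩ ⟨hq₀, le_rfl⟩ h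
    linarith
  · have := hmono (Set.mem_Ici.mpr le_rfl) (Set.mem_Ici.mpr h) h
    linarith
end

section
/- Let x, y : (0,∞) → ℝ be twice differentiable with y'(q) = −q·x'(q) for every q > 0, let q₀ > 0 satisfy x'(q₀) < 0, and let L > 0. Define κ(q₀) := (x'(q₀)·y''(q₀) − y'(q₀)·x''(q₀)) / (x'(q₀)² + y'(q₀)²)^{3/2}. Then κ(q₀) = −2·q₀^{3/2} / (L·(1 + q₀²)^{3/2}) if and only if L = −2·q₀^{3/2}·x'(q₀). In other words, the price impact of the AMM at price q₀ matches that of the constant product market maker with liquidity L exactly when L = −2·q₀^{3/2}·x'(q₀). -/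
/-!
Differentiating `y' = -q x'` gives `y'' = -x' - q x''`, so the numerator of the curvature is
`-x'²` and its denominator is `|x'|³ (1 + q²)^{3/2}`. Hence `κ(q₀) = -1 / (|x'(q₀)| (1 + q₀²)^{3/2})`,
which is the CPMM curvature `-2 q₀^{3/2} / (L (1 + q₀²)^{3/2})` exactly when
`L = 2 q₀^{3/2} |x'(q₀)|`.
-/

open Filter Topology

theorem HasDerivAt.eq_of_eventuallyEq_neg_mul {f g : ℝ → ℝ} {f' g' q₀ : ℝ}
    (hf : HasDerivAt f f' q₀) (hg : HasDerivAt g g' q₀)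
    (hgf : g =ᶠ[𝓝 q₀] fun q => -q * f q) : g' = -f q₀ - q₀ * f' := by
  rw [hg.unique (((hasDerivAt_neg q₀).mul hf).congr_of_eventuallyEq hgf)]
  ring

theorem Real.sq_mul_rpow_three_halves (a : ℝ) {b : ℝ} (hb : 0 ≤ b) :
    (a ^ 2 * b) ^ ((3 : ℝ) / 2) = |a| ^ 3 * b ^ ((3 : ℝ) / 2) := by
  rw [Real.mul_rpow (sq_nonneg a) hb, ← sq_abs, ← Real.rpow_natCast,
    ← Real.rpow_mul (abs_nonneg a)]
  norm_num

theorem amm_curvature_eq_neg_one_div (dx ddx q : ℝ) :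
    (dx * (-dx - q * ddx) - (-q * dx) * ddx) / ((dx ^ 2 + (-q * dx) ^ 2) ^ ((3 : ℝ) / 2)) =
      -1 / (|dx| * (1 + q ^ 2) ^ ((3 : ℝ) / 2)) := by
  have hnum : dx * (-dx - q * ddx) - (-q * dx) * ddx = -|dx| ^ 2 := by rw [sq_abs]; ring
  have hden : dx ^ 2 + (-q * dx) ^ 2 = dx ^ 2 * (1 + q ^ 2) := by ring
  rw [hnum, hden, Real.sq_mul_rpow_three_halves dx (by positivity)]
  rcases eq_or_ne dx 0 with rfl | hdx
  · simp
  have hA : (1 + q ^ 2) ^ ((3 : ℝ) / 2) ≠ 0 := by positivity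
  field_simp

theorem neg_one_div_mul_eq_div_mul_iff {u c A : ℝ} (L : ℝ) (hc : c ≠ 0) (hA : A ≠ 0) :
    -1 / (u * A) = c / (L * A) ↔ L = -c * u := by
  have h : c / (L * A) = -1 / (L / -c * A) := by
    rw [div_mul_eq_mul_div, div_div_eq_mul_div, neg_one_mul, neg_neg]
  rw [h, neg_div, neg_div, neg_inj, one_div, one_div, inv_inj, mul_left_inj' hA,
    eq_div_iff (neg_ne_zero.mpr hc), mul_comm, eq_comm]

theorem curvature_matches_cpmm_iff_general (x' y' : ℝ → ℝ) (x'' y'' : ℝ)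
    (hy' : ∀ q : ℝ, 0 < q → y' q = -q * x' q)
    (q₀ : ℝ) (hq₀ : 0 < q₀)
    (hdx' : HasDerivAt x' x'' q₀) (hdy' : HasDerivAt y' y'' q₀)
    (hx'neg : x' q₀ < 0) (L : ℝ) :
    (x' q₀ * y'' - y' q₀ * x'') / ((x' q₀ ^ 2 + y' q₀ ^ 2) ^ ((3 : ℝ) / 2)) =
        -2 * q₀ ^ ((3 : ℝ) / 2) / (L * (1 + q₀ ^ 2) ^ ((3 : ℝ) / 2)) ↔
      L = -2 * q₀ ^ ((3 : ℝ) / 2) * x' q₀ := by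
  have hy'' : y'' = -x' q₀ - q₀ * x'' :=
    hdx'.eq_of_eventuallyEq_neg_mul hdy' <|
      eventually_of_mem (Ioi_mem_nhds hq₀) fun q hq => hy' q hq
  rw [hy'', hy' q₀ hq₀, amm_curvature_eq_neg_one_div, abs_of_neg hx'neg,
    neg_one_div_mul_eq_div_mul_iff L (by positivity) (by positivity)]
  ring_nf

/-- For twice differentiable portfolio update functions with
`y'(q) = -q·x'(q)` for all `q > 0`, `x'(q₀) < 0` and `L > 0`, the curvature of the AMM at
`q₀` equals the curvature `−2q₀^{3/2}/(L(1+q₀²)^{3/2})` of the CPMM with liquidity `L`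
if and only if `L = −2·q₀^{3/2}·x'(q₀)`. -/
theorem curvature_matches_cpmm_iff (x y x' y' : ℝ → ℝ) (x'' y'' : ℝ)
    (hdx : ∀ q : ℝ, 0 < q → HasDerivAt x (x' q) q)
    (hdy : ∀ q : ℝ, 0 < q → HasDerivAt y (y' q) q)
    (hy' : ∀ q : ℝ, 0 < q → y' q = -q * x' q)
    (q₀ : ℝ) (hq₀ : 0 < q₀)
    (hdx' : HasDerivAt x' x'' q₀) (hdy' : HasDerivAt y' y'' q₀)
    (hx'neg : x' q₀ < 0) (L : ℝ) (hL : 0 < L) :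
    (x' q₀ * y'' - y' q₀ * x'') / ((x' q₀ ^ 2 + y' q₀ ^ 2) ^ ((3 : ℝ) / 2)) =
        -2 * q₀ ^ ((3 : ℝ) / 2) / (L * (1 + q₀ ^ 2) ^ ((3 : ℝ) / 2)) ↔
      L = -2 * q₀ ^ ((3 : ℝ) / 2) * x' q₀ :=
  curvature_matches_cpmm_iff_general x' y' x'' y'' hy' q₀ hq₀ hdx' hdy' hx'neg L
end

section
/- Let x, y : (0,∞) → ℝ be differentiable with y'(q) = −q·x'(q) for every q > 0, and suppose the AMM is symmetric between the two assets: x(q) = y(1/q) for every q > 0. Let c ≥ 0 and define ℓ(q) := −(c/2)·q²·x'(q). Then ℓ(q) = q·ℓ(1/q) for every q > 0. -/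
/-- For a symmetric AMM (`x(q) = y(1/q)` for all `q > 0`) with differentiable
portfolio update functions satisfying `y'(q) = −q·x'(q)`, the instantaneous
loss-versus-rebalancing `ℓ(q) = −(c/2)q²x'(q)` (with constant `c ≥ 0`) satisfies the
num\'eraire-invariance identity `ℓ(q) = q·ℓ(1/q)` for every `q > 0`. -/
theorem symmetric_amm_lvr_numeraire_invariance (x y x' y' : ℝ → ℝ)
    (hdx : ∀ q : ℝ, 0 < q → HasDerivAt x (x' q) q)
    (hdy : ∀ q : ℝ, 0 < q → HasDerivAt y (y' q) q)
    (hy' : ∀ q : ℝ, 0 < q → y' q = -q * x' q)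
    (hsym : ∀ q : ℝ, 0 < q → x q = y (1 / q))
    (c : ℝ) (hc : 0 ≤ c) :
    let ℓ : ℝ → ℝ := fun q => -(c / 2) * q ^ 2 * x' q
    ∀ q : ℝ, 0 < q → ℓ q = q * ℓ (1 / q) := by
  intro ℓ q hq
  have hq' : (0 : ℝ) < 1 / q := by positivity
  have hne : q ≠ 0 := ne_of_gt hq
  -- derivative of q ↦ y (1/q) at q
  have hinv : HasDerivAt (fun t : ℝ => 1 / t) (-(1 / q ^ 2)) q := by
    simpa using (hasDerivAt_inv hne)
  have hcomp : HasDerivAt (fun t : ℝ => y (1 / t)) (y' (1 / q) * (-(1 / q ^ 2))) q :=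
    (hdy _ hq').comp q hinv
  -- x agrees with this function on a neighborhood of q
  have heq : x' q = y' (1 / q) * (-(1 / q ^ 2)) := by
    have hmem : Set.Ioi (0 : ℝ) ∈ nhds q := Ioi_mem_nhds hq
    have hfeq : x =ᶠ[nhds q] fun t : ℝ => y (1 / t) :=
      Filter.eventuallyEq_of_mem hmem (fun t ht => hsym t ht)
    exact (hdx q hq).unique (hcomp.congr_of_eventuallyEq hfeq)
  have hx : x' q = (1 / q ^ 3) * x' (1 / q) := by
    rw [heq, hy' _ hq']
    ring
  simp only [ℓ, hx]
  field_simp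
end

section
/- Let T > 0, p₀ > 0, and let γ denote the standard Gaussian measure on ℝ (mean 0, variance 1). Let C̄ : ℝ → ℝ be continuous on (0,∞), nonnegative on (0,∞), nondecreasing on (0,∞), concave on (0,∞), and satisfy a linear growth bound C̄(q) ≤ A + B·q for all q > 0 for some constants A, B ≥ 0. Define G(σ) := ∫ C̄(p₀·exp(−σ²T/2 + σ√T·z)) dγ(z) for σ ≥ 0. Then G(0) = C̄(p₀) and G is nonincreasing on [0,∞). -/
/-!
Write `v = σ²T` and `U ∼ N(0, v)`, so that `G(σ) = E[C̄(p₀ exp(U - v/2))]`. Since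
`N(0, v + d) = N(0, v) ∗ N(0, d)`, the expectation at variance `v + d` is the `N(0, v)`-average
of the expectation at variance `d` started from `p₀ exp(U - v/2)`. The factor `exp(W - d/2)`,
`W ∼ N(0, d)`, has mean one, so by Jensen's inequality for the concave `C̄` the inner expectation
is at most `C̄(p₀ exp(U - v/2))`; hence `G` decreases as `v` grows.
-/

open MeasureTheory ProbabilityTheory Real Set
open scoped NNReal

theorem ConvexOn.add_rightDeriv_mul_sub_le {S : Set ℝ} {f : ℝ → ℝ} {x y : ℝ}
    (hf : ConvexOn ℝ S f) (hx : x ∈ interior S) (hy : y ∈ S) :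
    f x + derivWithin f (Ioi x) x * (y - x) ≤ f y := by
  rcases lt_trichotomy y x with hyx | rfl | hxy
  · have h := (hf.slope_le_leftDeriv_of_mem_interior hy hx hyx).trans
      (hf.leftDeriv_le_rightDeriv_of_mem_interior hx)
    rw [slope_def_field, div_le_iff₀ (sub_pos.2 hyx)] at h
    linarith
  · simp
  · have h := hf.rightDeriv_le_slope_of_mem_interior hx hy hxy
    rw [slope_def_field, le_div_iff₀ (sub_pos.2 hxy)] at h
    linarith

theorem ConcaveOn.exists_le_add_mul_sub {S : Set ℝ} {g : ℝ → ℝ} {x : ℝ}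
    (hg : ConcaveOn ℝ S g) (hx : x ∈ interior S) :
    ∃ m, ∀ y ∈ S, g y ≤ g x + m * (y - x) :=
  ⟨-derivWithin (-g) (Ioi x) x, fun y hy => by
    have := hg.neg.add_rightDeriv_mul_sub_le hx hy
    simp only [Pi.neg_apply] at this
    linarith⟩

theorem ConcaveOn.le_map_integral_of_mem_interior {Ω : Type*} {mΩ : MeasurableSpace Ω}
    {μ : Measure Ω} [IsProbabilityMeasure μ] {S : Set ℝ} {g : ℝ → ℝ} {f : Ω → ℝ}
    (hg : ConcaveOn ℝ S g) (hfS : ∀ᵐ ω ∂μ, f ω ∈ S) (hf : Integrable f μ)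
    (hgf : Integrable (g ∘ f) μ) (hmean : ∫ ω, f ω ∂μ ∈ interior S) :
    ∫ ω, g (f ω) ∂μ ≤ g (∫ ω, f ω ∂μ) := by
  obtain ⟨m, hm⟩ := hg.exists_le_add_mul_sub hmean
  set x := ∫ ω, f ω ∂μ
  have hdev : Integrable (fun ω => m * (f ω - x)) μ :=
    (hf.sub (integrable_const x)).const_mul m
  calc ∫ ω, g (f ω) ∂μ ≤ ∫ ω, (g x + m * (f ω - x)) ∂μ :=
        integral_mono_ae hgf ((integrable_const _).add hdev) (hfS.mono fun ω hω => hm _ hω)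
    _ = g x := by
        rw [integral_add (integrable_const _) hdev, integral_const_mul,
          integral_sub hf (integrable_const _)]
        simp [x]

theorem integral_exp_sub_half_var_gaussianReal (v : ℝ≥0) :
    ∫ u, exp (u - v / 2) ∂gaussianReal 0 v = 1 := by
  have h := congrFun (mgf_id_gaussianReal (μ := 0) (v := v)) 1
  simp only [mgf, id, one_mul, zero_add, one_pow, mul_one] at h
  simp_rw [sub_eq_add_neg, exp_add, integral_mul_const, h, ← exp_add]
  simp

theorem integrable_mul_exp_sub_gaussianReal (x c μ : ℝ) (v : ℝ≥0) :
    Integrable (fun u => x * exp (u - c)) (gaussianReal μ v) := by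
  simp_rw [exp_sub]
  simpa using
    ((integrable_exp_mul_gaussianReal (μ := μ) (v := v) 1).div_const (exp c)).const_mul x

theorem integrable_comp_of_nonneg_of_le_add_mul {Ω : Type*} {mΩ : MeasurableSpace Ω}
    {μ : Measure Ω} [IsFiniteMeasure μ] {C : ℝ → ℝ} {A B : ℝ} {Y : Ω → ℝ}
    (hnn : ∀ q, 0 < q → 0 ≤ C q) (hgrowth : ∀ q, 0 < q → C q ≤ A + B * q)
    (hY : Integrable Y μ) (hYpos : ∀ᵐ ω ∂μ, 0 < Y ω)
    (hCY : AEStronglyMeasurable (fun ω => C (Y ω)) μ) :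
    Integrable (fun ω => C (Y ω)) μ :=
  ((integrable_const A).add (hY.const_mul B)).mono' hCY <| hYpos.mono fun ω hω => by
    rw [Real.norm_eq_abs, abs_of_nonneg (hnn _ hω)]
    exact hgrowth _ hω

noncomputable def lognormalExpectation (C : ℝ → ℝ) (x : ℝ) (v : ℝ≥0) : ℝ :=
  ∫ u, C (x * exp (u - v / 2)) ∂gaussianReal 0 v

theorem lognormalExpectation_zero (C : ℝ → ℝ) (x : ℝ) :
    lognormalExpectation C x 0 = C x := by
  simp [lognormalExpectation, gaussianReal_zero_var]

section

variable {C : ℝ → ℝ} {A B x : ℝ}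

theorem ContinuousOn.continuous_comp_mul_exp (hcont : ContinuousOn C (Ioi 0)) (hx : 0 < x)
    {c : ℝ} : Continuous fun u => C (x * exp (u - c)) :=
  hcont.comp_continuous (by fun_prop) fun _ => mem_Ioi.2 (by positivity)

theorem integrable_comp_mul_exp_gaussianReal (hcont : ContinuousOn C (Ioi 0))
    (hnn : ∀ q, 0 < q → 0 ≤ C q) (hgrowth : ∀ q, 0 < q → C q ≤ A + B * q) (hx : 0 < x)
    (c μ : ℝ) (v : ℝ≥0) :
    Integrable (fun u => C (x * exp (u - c))) (gaussianReal μ v) :=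
  integrable_comp_of_nonneg_of_le_add_mul hnn hgrowth
    (integrable_mul_exp_sub_gaussianReal x c μ v)
    (ae_of_all _ fun _ => by positivity) (hcont.continuous_comp_mul_exp hx).aestronglyMeasurable

theorem lognormalExpectation_le (hconc : ConcaveOn ℝ (Ioi 0) C) (hnn : ∀ q, 0 < q → 0 ≤ C q)
    (hgrowth : ∀ q, 0 < q → C q ≤ A + B * q) (hx : 0 < x) (v : ℝ≥0) :
    lognormalExpectation C x v ≤ C x := by
  have hmean : ∫ u, x * exp (u - v / 2) ∂gaussianReal 0 v = x := by
    rw [integral_const_mul, integral_exp_sub_half_var_gaussianReal, mul_one]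
  have h := hconc.le_map_integral_of_mem_interior
    (ae_of_all _ fun _ => mem_Ioi.2 (by positivity))
    (integrable_mul_exp_sub_gaussianReal x _ 0 v)
    (integrable_comp_mul_exp_gaussianReal (hconc.continuousOn isOpen_Ioi) hnn hgrowth hx _ 0 v)
    (by rw [hmean, interior_Ioi]; exact hx)
  rwa [hmean] at h

theorem lognormalExpectation_add (hcont : ContinuousOn C (Ioi 0)) (hnn : ∀ q, 0 < q → 0 ≤ C q)
    (hgrowth : ∀ q, 0 < q → C q ≤ A + B * q) (hx : 0 < x) (v₁ v₂ : ℝ≥0) :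
    lognormalExpectation C x (v₁ + v₂)
      = ∫ u, lognormalExpectation C (x * exp (u - v₁ / 2)) v₂ ∂gaussianReal 0 v₁ := by
  have hconv : gaussianReal 0 (v₁ + v₂) = gaussianReal 0 v₁ ∗ gaussianReal 0 v₂ := by
    rw [gaussianReal_conv_gaussianReal, add_zero]
  unfold lognormalExpectation
  rw [hconv, integral_conv (by
    rw [← hconv]; exact integrable_comp_mul_exp_gaussianReal hcont hnn hgrowth hx _ 0 _)]
  refine integral_congr_ae (ae_of_all _ fun u => integral_congr_ae (ae_of_all _ fun w => ?_))
  simp only [mul_assoc, ← exp_add, NNReal.coe_add]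
  ring_nf

theorem antitone_lognormalExpectation (hconc : ConcaveOn ℝ (Ioi 0) C)
    (hnn : ∀ q, 0 < q → 0 ≤ C q) (hgrowth : ∀ q, 0 < q → C q ≤ A + B * q) (hx : 0 < x) :
    Antitone (lognormalExpectation C x) := by
  intro v₁ v₂ hv
  obtain ⟨d, rfl⟩ := exists_add_of_le hv
  have hcont := hconc.continuousOn isOpen_Ioi
  rw [lognormalExpectation_add hcont hnn hgrowth hx]
  exact integral_mono_of_nonneg
    (ae_of_all _ fun _ => integral_nonneg fun _ => hnn _ (by positivity))
    (integrable_comp_mul_exp_gaussianReal hcont hnn hgrowth hx _ 0 v₁)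
    (ae_of_all _ fun _ => lognormalExpectation_le hconc hnn hgrowth (by positivity) d)

theorem integral_comp_mul_exp_eq_lognormalExpectation (hcont : ContinuousOn C (Ioi 0))
    (hx : 0 < x) (c : ℝ) :
    ∫ z, C (x * exp (-c ^ 2 / 2 + c * z)) ∂gaussianReal 0 1
      = lognormalExpectation C x (c ^ 2).toNNReal := by
  have hmap : (gaussianReal 0 1).map (c * ·) = gaussianReal 0 (c ^ 2).toNNReal := by
    rw [gaussianReal_map_const_mul, mul_zero, mul_one, Real.toNNReal_of_nonneg (sq_nonneg c)]
  rw [lognormalExpectation, ← hmap, integral_map (by fun_prop)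
    (hcont.continuous_comp_mul_exp hx).aestronglyMeasurable, Real.coe_toNNReal _ (sq_nonneg c)]
  ring_nf

end

theorem expected_pool_value_antitone_general (T p₀ : ℝ) (hT : 0 < T) (hp₀ : 0 < p₀)
    (C : ℝ → ℝ)
    (hnn : ∀ q : ℝ, 0 < q → 0 ≤ C q)
    (hconc : ConcaveOn ℝ (Set.Ioi (0 : ℝ)) C)
    (A B : ℝ)
    (hgrowth : ∀ q : ℝ, 0 < q → C q ≤ A + B * q) :
    let G : ℝ → ℝ := fun σ =>
      ∫ z, C (p₀ * Real.exp (-σ ^ 2 * T / 2 + σ * Real.sqrt T * z))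
        ∂(gaussianReal 0 1)
    G 0 = C p₀ ∧ AntitoneOn G (Set.Ici (0 : ℝ)) := by
  intro G
  have hG (σ : ℝ) : G σ = lognormalExpectation C p₀ (σ ^ 2 * T).toNNReal := by
    rw [← sq_sqrt hT.le, ← mul_pow,
      ← integral_comp_mul_exp_eq_lognormalExpectation (hconc.continuousOn isOpen_Ioi) hp₀]
    simp only [G, neg_div, neg_mul, mul_pow, sq_sqrt hT.le]
  refine ⟨by simp [hG, lognormalExpectation_zero], fun σ₁ hσ₁ σ₂ _ hσ => ?_⟩
  rw [hG, hG]
  exact antitone_lognormalExpectation hconc hnn hgrowth hp₀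
    (Real.toNNReal_le_toNNReal (by gcongr))

/-- Let `C̄` be continuous, nonnegative, nondecreasing, and concave on
`(0,∞)` with linear growth `C̄(q) ≤ A + B·q`. Then the risk-neutral expected discounted
pool value `G(σ) = ∫ C̄(p₀·exp(−σ²T/2 + σ√T·z)) dγ(z)` (with `γ` the standard Gaussian)
satisfies `G(0) = C̄(p₀)` and `G` is nonincreasing on `[0,∞)`. -/
theorem expected_pool_value_antitone (T p₀ : ℝ) (hT : 0 < T) (hp₀ : 0 < p₀)
    (C : ℝ → ℝ) (hcont : ContinuousOn C (Set.Ioi (0 : ℝ)))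
    (hnn : ∀ q : ℝ, 0 < q → 0 ≤ C q)
    (hmono : MonotoneOn C (Set.Ioi (0 : ℝ)))
    (hconc : ConcaveOn ℝ (Set.Ioi (0 : ℝ)) C)
    (A B : ℝ) (hA : 0 ≤ A) (hB : 0 ≤ B)
    (hgrowth : ∀ q : ℝ, 0 < q → C q ≤ A + B * q) :
    let G : ℝ → ℝ := fun σ =>
      ∫ z, C (p₀ * Real.exp (-σ ^ 2 * T / 2 + σ * Real.sqrt T * z))
        ∂(gaussianReal 0 1)
    G 0 = C p₀ ∧ AntitoneOn G (Set.Ici (0 : ℝ)) :=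
  expected_pool_value_antitone_general T p₀ hT hp₀ C hnn hconc A B hgrowth
end

section
/- Let T > 0, p₀ > 0, and let γ denote the standard Gaussian measure on ℝ (mean 0, variance 1). Let C̄ : ℝ → ℝ be continuous on (0,∞), nonnegative on (0,∞), nondecreasing on (0,∞), concave on (0,∞), satisfy a linear growth bound C̄(q) ≤ A + B·q for all q > 0 for some constants A, B ≥ 0, and suppose there exist 0 < q̲ < q̄ such that C̄ is strictly concave on (q̲, q̄). Define G(σ) := ∫ C̄(p₀·exp(−σ²T/2 + σ√T·z)) dγ(z). Then G is strictly decreasing on [0,∞): for all 0 ≤ σ₁ < σ₂, G(σ₂) < G(σ₁). -/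
/-!
Write `v = σ²T` for the variance of the log-price. Since `N(0, v + d) = N(0, v) ∗ N(0, d)`,
the pool value at variance `v + d` is the `N(0, v)`-average over `x` of the pool value at
variance `d` started from the price `m = p₀ exp(-v/2 + x)`, namely
`∫ C(m exp(-d/2 + y)) dN(0, d)(y)`. This is `𝔼 C(Q)` for a random price `Q` of mean `m` whose law
charges every open subset of `(0, ∞)`. A supporting line of the concave `C` at `m` has
expectation `C m` under that law, and it lies strictly above `C` somewhere in `(q̲, q̄)` by strict
concavity there, so `𝔼 C(Q) < C m`.
-/

open MeasureTheory ProbabilityTheory Real Set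
open scoped NNReal

lemma ConcaveOn.exists_le_affine {S : Set ℝ} {f : ℝ → ℝ} (hf : ConcaveOn ℝ S f) {x : ℝ}
    (hx : x ∈ interior S) : ∃ d, ∀ y ∈ S, f y ≤ f x + d * (y - x) := by
  refine ⟨-derivWithin (-f) (Ioi x) x, fun y hy => ?_⟩
  rcases lt_trichotomy y x with hyx | rfl | hxy
  · have h := (hf.neg.slope_le_leftDeriv_of_mem_interior hy hx hyx).trans
      (hf.neg.leftDeriv_le_rightDeriv_of_mem_interior hx)
    rw [slope_def_field, div_le_iff₀ (sub_pos.2 hyx)] at h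
    simp only [Pi.neg_apply] at h
    linarith
  · simp
  · have h := hf.neg.rightDeriv_le_slope_of_mem_interior hx hy hxy
    rw [slope_def_field, le_div_iff₀ (sub_pos.2 hxy)] at h
    simp only [Pi.neg_apply] at h
    linarith

lemma StrictConcaveOn.exists_lt_of_le_affine {s : Set ℝ} {f : ℝ → ℝ}
    (hf : StrictConcaveOn ℝ s f) (hs : s.Nontrivial) {a b : ℝ}
    (hle : ∀ q ∈ s, f q ≤ a + b * q) : ∃ q ∈ s, f q < a + b * q := by
  obtain ⟨x, hx, y, hy, hxy⟩ := hs
  by_contra! h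
  have heq : ∀ q ∈ s, f q = a + b * q := fun q hq => (hle q hq).antisymm (h q hq)
  have hmid := hf.2 hx hy hxy (by norm_num : (0 : ℝ) < 1 / 2) (by norm_num : (0 : ℝ) < 1 / 2)
    (by norm_num)
  rw [heq _ (hf.1 hx hy (by norm_num) (by norm_num) (by norm_num)), heq x hx, heq y hy] at hmid
  simp only [smul_eq_mul] at hmid
  linarith

lemma integral_lt_integral_of_forall_lt {α : Type*} [MeasurableSpace α] {μ : Measure α}
    [NeZero μ] {f g : α → ℝ} (hf : Integrable f μ) (hg : Integrable g μ) (h : ∀ x, f x < g x) :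
    ∫ x, f x ∂μ < ∫ x, g x ∂μ := by
  have hsupp : Function.support (fun x => g x - f x) = univ :=
    eq_univ_of_forall fun x => sub_ne_zero.2 (h x).ne'
  have hpos := (integral_pos_iff_support_of_nonneg (fun x => sub_nonneg.2 (h x).le)
    (hg.sub hf)).2 (by rw [hsupp]; exact Measure.measure_univ_pos.2 (NeZero.ne μ))
  rw [integral_sub hg hf] at hpos
  linarith

lemma integrable_comp_of_le_add_mul {α : Type*} [MeasurableSpace α] {μ : Measure α}
    [IsFiniteMeasure μ] {C : ℝ → ℝ} {A B : ℝ} (hnn : ∀ q, 0 < q → 0 ≤ C q)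
    (hgrowth : ∀ q, 0 < q → C q ≤ A + B * q) {Q : α → ℝ} (hQpos : ∀ x, 0 < Q x)
    (hQ : Integrable Q μ) (hCQ : AEStronglyMeasurable (fun x => C (Q x)) μ) :
    Integrable (fun x => C (Q x)) μ := by
  refine Integrable.mono' ((integrable_const |A|).add (hQ.const_mul |B|)) hCQ
    (ae_of_all _ fun x => ?_)
  rw [Real.norm_of_nonneg (hnn _ (hQpos x))]
  calc C (Q x) ≤ A + B * Q x := hgrowth _ (hQpos x)
    _ ≤ |A| + |B| * Q x :=
      add_le_add (le_abs_self A) (mul_le_mul_of_nonneg_right (le_abs_self B) (hQpos x).le)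

theorem ConcaveOn.lt_map_integral_of_strictConcaveOn {α : Type*} [MeasurableSpace α]
    [TopologicalSpace α] {μ : Measure α} [IsProbabilityMeasure μ] [μ.IsOpenPosMeasure]
    {C : ℝ → ℝ} (hconc : ConcaveOn ℝ (Ioi 0) C) (hcont : ContinuousOn C (Ioi 0))
    {qlo qhi : ℝ} (hqlo : 0 < qlo) (hqs : qlo < qhi) (hstrict : StrictConcaveOn ℝ (Ioo qlo qhi) C)
    {Q : α → ℝ} (hQ : Continuous Q) (hQpos : ∀ x, 0 < Q x) (hQsurj : Ioo qlo qhi ⊆ range Q)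
    (hQint : Integrable Q μ) (hCQ : Integrable (fun x => C (Q x)) μ) :
    ∫ x, C (Q x) ∂μ < C (∫ x, Q x ∂μ) := by
  set m := ∫ x, Q x ∂μ
  obtain ⟨x₁⟩ := nonempty_of_isProbabilityMeasure μ
  have hm : 0 < m := integral_pos_of_integrable_nonneg_nonzero hQ hQint (fun x => (hQpos x).le)
    (hQpos x₁).ne'
  obtain ⟨d, hd⟩ := hconc.exists_le_affine (x := m) (by rwa [interior_Ioi])
  have hIoo : Ioo qlo qhi ⊆ Ioi 0 := fun q hq => hqlo.trans hq.1
  obtain ⟨_, hq, hlt⟩ := hstrict.exists_lt_of_le_affine (Ioo_infinite hqs).nontrivial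
    (a := C m - d * m) (b := d) fun q hq => (hd q (hIoo hq)).trans_eq (by ring)
  obtain ⟨x, rfl⟩ := hQsurj hq
  have hlin : Integrable (fun y => d * (Q y - m)) μ :=
    (hQint.sub (integrable_const m)).const_mul d
  have hℓint : Integrable (fun y => C m + d * (Q y - m)) μ := (integrable_const _).add hlin
  have hℓ : ∫ y, (C m + d * (Q y - m)) ∂μ = C m := by
    rw [integral_add (integrable_const _) hlin, integral_const_mul,
      integral_sub hQint (integrable_const m)]
    simp [m]
  have hgap : 0 < ∫ y, (C m + d * (Q y - m) - C (Q y)) ∂μ :=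
    integral_pos_of_integrable_nonneg_nonzero
      ((continuous_const.add (continuous_const.mul (hQ.sub continuous_const))).sub
        (hcont.comp_continuous hQ hQpos)) (hℓint.sub hCQ)
      (fun y => sub_nonneg.2 (hd _ (hQpos y))) (x := x) (by linarith)
  rw [integral_sub hℓint hCQ, hℓ] at hgap
  linarith

lemma integrable_mul_exp_add_gaussianReal (μ : ℝ) (v : ℝ≥0) (m a : ℝ) :
    Integrable (fun x => m * exp (a + x)) (gaussianReal μ v) := by
  simpa [exp_add, mul_assoc] using
    (integrable_exp_mul_gaussianReal (μ := μ) (v := v) 1).const_mul (m * exp a)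

lemma integral_mul_exp_gaussianReal (v : ℝ≥0) (m : ℝ) :
    ∫ x, m * exp (-v / 2 + x) ∂gaussianReal 0 v = m := by
  have hmgf : ∫ x, exp x ∂gaussianReal 0 v = exp (v / 2) := by
    simpa [mgf] using congrFun (mgf_id_gaussianReal (μ := 0) (v := v)) 1
  simp_rw [exp_add, ← mul_assoc]
  rw [integral_const_mul, hmgf, mul_assoc, ← exp_add, neg_div, neg_add_cancel, exp_zero, mul_one]

lemma isOpenPosMeasure_gaussianReal (μ : ℝ) {v : ℝ≥0} (hv : v ≠ 0) :
    (gaussianReal μ v).IsOpenPosMeasure :=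
  (gaussianReal_absolutelyContinuous' μ hv).isOpenPosMeasure

lemma integrable_comp_mul_exp_add_gaussianReal {C : ℝ → ℝ} (hcont : ContinuousOn C (Ioi 0))
    (hnn : ∀ q, 0 < q → 0 ≤ C q) {A B : ℝ} (hgrowth : ∀ q, 0 < q → C q ≤ A + B * q)
    (μ : ℝ) (v : ℝ≥0) {m : ℝ} (hm : 0 < m) (a : ℝ) :
    Integrable (fun x => C (m * exp (a + x))) (gaussianReal μ v) :=
  integrable_comp_of_le_add_mul hnn hgrowth (fun x => mul_pos hm (exp_pos _))
    (integrable_mul_exp_add_gaussianReal μ v m a)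
    (hcont.comp_continuous (by fun_prop) (fun x => mul_pos hm (exp_pos _))).aestronglyMeasurable

lemma integral_comp_mul_exp_gaussianReal_lt {C : ℝ → ℝ} (hconc : ConcaveOn ℝ (Ioi 0) C)
    (hcont : ContinuousOn C (Ioi 0)) (hnn : ∀ q, 0 < q → 0 ≤ C q) {A B : ℝ}
    (hgrowth : ∀ q, 0 < q → C q ≤ A + B * q) {qlo qhi : ℝ} (hqlo : 0 < qlo) (hqs : qlo < qhi)
    (hstrict : StrictConcaveOn ℝ (Ioo qlo qhi) C) {v : ℝ≥0} (hv : v ≠ 0) {m : ℝ} (hm : 0 < m) :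
    ∫ x, C (m * exp (-v / 2 + x)) ∂gaussianReal 0 v < C m := by
  have := isOpenPosMeasure_gaussianReal 0 hv
  have hsurj : Ioo qlo qhi ⊆ range fun x => m * exp (-v / 2 + x) := fun q hq =>
    ⟨log (q / m) + v / 2, by
      dsimp only
      rw [show -(v : ℝ) / 2 + (log (q / m) + v / 2) = log (q / m) by ring,
        exp_log (div_pos (hqlo.trans hq.1) hm)]
      field_simp⟩
  simpa only [integral_mul_exp_gaussianReal] using
    hconc.lt_map_integral_of_strictConcaveOn hcont hqlo hqs hstrict (by fun_prop)
      (fun x => mul_pos hm (exp_pos _)) hsurj (integrable_mul_exp_add_gaussianReal 0 v m _)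
      (integrable_comp_mul_exp_add_gaussianReal hcont hnn hgrowth 0 v hm _)

noncomputable def gaussianPoolValue (C : ℝ → ℝ) (p₀ : ℝ) (v : ℝ≥0) : ℝ :=
  ∫ x, C (p₀ * exp (-v / 2 + x)) ∂gaussianReal 0 v

theorem gaussianPoolValue_strictAnti {C : ℝ → ℝ} (hconc : ConcaveOn ℝ (Ioi 0) C)
    (hcont : ContinuousOn C (Ioi 0)) (hnn : ∀ q, 0 < q → 0 ≤ C q) {A B : ℝ}
    (hgrowth : ∀ q, 0 < q → C q ≤ A + B * q) {qlo qhi : ℝ} (hqlo : 0 < qlo) (hqs : qlo < qhi)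
    (hstrict : StrictConcaveOn ℝ (Ioo qlo qhi) C) {p₀ : ℝ} (hp₀ : 0 < p₀) :
    StrictAnti (gaussianPoolValue C p₀) := by
  intro v w hvw
  obtain ⟨d, hd, rfl⟩ : ∃ d : ℝ≥0, d ≠ 0 ∧ w = v + d :=
    ⟨w - v, (tsub_pos_of_lt hvw).ne', (add_tsub_cancel_of_le hvw.le).symm⟩
  have hconv : gaussianReal 0 (v + d) = gaussianReal 0 v ∗ gaussianReal 0 d := by
    rw [gaussianReal_conv_gaussianReal, add_zero]
  set f := fun x => C (p₀ * exp (-↑(v + d) / 2 + x))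
  have hf : Integrable f (gaussianReal 0 v ∗ gaussianReal 0 d) :=
    hconv ▸ integrable_comp_mul_exp_add_gaussianReal hcont hnn hgrowth 0 _ hp₀ _
  have hsplit (x y : ℝ) : f (x + y) = C (p₀ * exp (-v / 2 + x) * exp (-d / 2 + y)) := by
    simp only [f, mul_assoc, ← exp_add, NNReal.coe_add]
    ring_nf
  have hinner (x : ℝ) : ∫ y, f (x + y) ∂gaussianReal 0 d < C (p₀ * exp (-v / 2 + x)) := by
    simpa only [hsplit] using integral_comp_mul_exp_gaussianReal_lt hconc hcont hnn hgrowth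
      hqlo hqs hstrict hd (by positivity : 0 < p₀ * exp (-v / 2 + x))
  have hinner_int : Integrable (fun x => ∫ y, f (x + y) ∂gaussianReal 0 d) (gaussianReal 0 v) :=
    ((integrable_map_measure hf.1 (by fun_prop)).mp hf).integral_prod_left
  rw [gaussianPoolValue, hconv, integral_conv hf]
  exact integral_lt_integral_of_forall_lt hinner_int
    (integrable_comp_mul_exp_add_gaussianReal hcont hnn hgrowth 0 v hp₀ _) hinner

lemma integral_comp_exp_gaussianReal_eq_gaussianPoolValue {C : ℝ → ℝ}
    (hcont : ContinuousOn C (Ioi 0)) {p₀ : ℝ} (hp₀ : 0 < p₀) {T : ℝ} (hT : 0 ≤ T) (σ : ℝ) :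
    ∫ z, C (p₀ * exp (-σ ^ 2 * T / 2 + σ * √T * z)) ∂gaussianReal 0 1
      = gaussianPoolValue C p₀ (σ ^ 2 * T).toNNReal := by
  have hmap : (gaussianReal 0 1).map (σ * √T * ·) = gaussianReal 0 (σ ^ 2 * T).toNNReal := by
    convert gaussianReal_map_const_mul (μ := 0) (v := 1) (σ * √T) using 2
    · simp
    · ext
      simp [mul_pow, sq_sqrt hT, mul_nonneg (sq_nonneg σ) hT]
  have hcomp : Continuous fun x => C (p₀ * exp (-((σ ^ 2 * T).toNNReal : ℝ) / 2 + x)) :=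
    hcont.comp_continuous (by fun_prop) fun x => mul_pos hp₀ (exp_pos _)
  rw [gaussianPoolValue, ← hmap, integral_map (by fun_prop) hcomp.aestronglyMeasurable]
  simp [mul_nonneg (sq_nonneg σ) hT, neg_div, mul_assoc]

theorem expected_pool_value_strictAnti_general (T p₀ : ℝ) (hT : 0 < T) (hp₀ : 0 < p₀)
    (C : ℝ → ℝ) (hcont : ContinuousOn C (Set.Ioi (0 : ℝ)))
    (hnn : ∀ q : ℝ, 0 < q → 0 ≤ C q)
    (hconc : ConcaveOn ℝ (Set.Ioi (0 : ℝ)) C)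
    (A B : ℝ)
    (hgrowth : ∀ q : ℝ, 0 < q → C q ≤ A + B * q)
    (qlo qhi : ℝ) (hqlo : 0 < qlo) (hqs : qlo < qhi)
    (hstrict : StrictConcaveOn ℝ (Set.Ioo qlo qhi) C) :
    let G : ℝ → ℝ := fun σ =>
      ∫ z, C (p₀ * Real.exp (-σ ^ 2 * T / 2 + σ * Real.sqrt T * z))
        ∂(gaussianReal 0 1)
    ∀ σ₁ σ₂ : ℝ, 0 ≤ σ₁ → σ₁ < σ₂ → G σ₂ < G σ₁ := by
  intro G σ₁ σ₂ hσ₁ hσ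
  simp only [G, integral_comp_exp_gaussianReal_eq_gaussianPoolValue hcont hp₀ hT.le]
  refine gaussianPoolValue_strictAnti hconc hcont hnn hgrowth hqlo hqs hstrict hp₀ ?_
  rw [Real.toNNReal_lt_toNNReal_iff (mul_pos (pow_pos (hσ₁.trans_lt hσ) 2) hT)]
  exact mul_lt_mul_of_pos_right (pow_lt_pow_left₀ hσ hσ₁ two_ne_zero) hT

/-- If additionally `C̄` is strictly concave on some interval `(q̲, q̄)` with
`0 < q̲ < q̄`, then the risk-neutral expected discounted pool value
`G(σ) = ∫ C̄(p₀·exp(−σ²T/2 + σ√T·z)) dγ(z)` is strictly decreasing on `[0,∞)`: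
for all `0 ≤ σ₁ < σ₂`, `G(σ₂) < G(σ₁)`. -/
theorem expected_pool_value_strictAnti (T p₀ : ℝ) (hT : 0 < T) (hp₀ : 0 < p₀)
    (C : ℝ → ℝ) (hcont : ContinuousOn C (Set.Ioi (0 : ℝ)))
    (hnn : ∀ q : ℝ, 0 < q → 0 ≤ C q)
    (hmono : MonotoneOn C (Set.Ioi (0 : ℝ)))
    (hconc : ConcaveOn ℝ (Set.Ioi (0 : ℝ)) C)
    (A B : ℝ) (hA : 0 ≤ A) (hB : 0 ≤ B)
    (hgrowth : ∀ q : ℝ, 0 < q → C q ≤ A + B * q)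
    (qlo qhi : ℝ) (hqlo : 0 < qlo) (hqs : qlo < qhi)
    (hstrict : StrictConcaveOn ℝ (Set.Ioo qlo qhi) C) :
    let G : ℝ → ℝ := fun σ =>
      ∫ z, C (p₀ * Real.exp (-σ ^ 2 * T / 2 + σ * Real.sqrt T * z))
        ∂(gaussianReal 0 1)
    ∀ σ₁ σ₂ : ℝ, 0 ≤ σ₁ → σ₁ < σ₂ → G σ₂ < G σ₁ :=
  expected_pool_value_strictAnti_general T p₀ hT hp₀ C hcont hnn hconc A B hgrowth qlo qhi hqlo hqs
    hstrict
end

section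
/- Let T > 0, p₀ > 0, and let γ denote the standard Gaussian measure on ℝ (mean 0, variance 1). Let C̄ : ℝ → ℝ be continuous on (0,∞), nonnegative on (0,∞), nondecreasing on (0,∞), satisfy a linear growth bound C̄(q) ≤ A + B·q for all q > 0 for some constants A, B ≥ 0, and suppose C̄(q) → 0 as q → 0⁺ and C̄(q)/q → 0 as q → ∞. Define G(σ) := ∫ C̄(p₀·exp(−σ²T/2 + σ√T·z)) dγ(z). Then G(σ) → 0 as σ → ∞. -/
open MeasureTheory ProbabilityTheory Filter

lemma gauss_pdf_mul (c d z : ℝ) :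
    gaussianPDFReal 0 1 z * Real.exp (c * z + d)
      = Real.exp (c ^ 2 / 2 + d) * gaussianPDFReal c 1 z := by
  simp only [gaussianPDFReal, NNReal.coe_one, mul_one, sub_zero]
  have h : -z ^ 2 / 2 + (c * z + d) = -(z - c) ^ 2 / 2 + (c ^ 2 / 2 + d) := by ring
  rw [mul_assoc, ← Real.exp_add, h, Real.exp_add]
  ring

lemma gauss_mgf_int (c d : ℝ) :
    Integrable (fun z => Real.exp (c * z + d)) (gaussianReal 0 1) := by
  rw [gaussianReal_of_var_ne_zero 0 one_ne_zero]
  have hm : Measurable fun x => (gaussianPDFReal 0 1 x).toNNReal :=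
    (measurable_gaussianPDFReal 0 1).real_toNNReal
  have hd : (gaussianPDF 0 1) = fun x => ((gaussianPDFReal 0 1 x).toNNReal : ENNReal) := by
    ext x; simp [gaussianPDF, ENNReal.ofReal]
  rw [hd, integrable_withDensity_iff_integrable_smul hm]
  have : (fun x => (gaussianPDFReal 0 1 x).toNNReal • Real.exp (c * x + d))
      = fun x => Real.exp (c ^ 2 / 2 + d) * gaussianPDFReal c 1 x := by
    ext x
    rw [NNReal.smul_def, Real.coe_toNNReal _ (gaussianPDFReal_nonneg 0 1 x), smul_eq_mul, gauss_pdf_mul]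
  rw [this]
  exact (integrable_gaussianPDFReal c 1).const_mul _

lemma gauss_mgf (c d : ℝ) :
    ∫ z, Real.exp (c * z + d) ∂(gaussianReal 0 1) = Real.exp (c ^ 2 / 2 + d) := by
  rw [gaussianReal_of_var_ne_zero 0 one_ne_zero]
  have hm : Measurable fun x => (gaussianPDFReal 0 1 x).toNNReal :=
    (measurable_gaussianPDFReal 0 1).real_toNNReal
  have hd : (gaussianPDF 0 1) = fun x => ((gaussianPDFReal 0 1 x).toNNReal : ENNReal) := by
    ext x; simp [gaussianPDF, ENNReal.ofReal]
  rw [hd, integral_withDensity_eq_integral_smul hm]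
  have : (fun x => (gaussianPDFReal 0 1 x).toNNReal • Real.exp (c * x + d))
      = fun x => Real.exp (c ^ 2 / 2 + d) * gaussianPDFReal c 1 x := by
    ext x
    rw [NNReal.smul_def, Real.coe_toNNReal _ (gaussianPDFReal_nonneg 0 1 x), smul_eq_mul, gauss_pdf_mul]
  rw [this, integral_const_mul, integral_gaussianPDFReal_eq_one c one_ne_zero, mul_one]

/-- If `C̄` is continuous, nonnegative, nondecreasing on `(0,∞)` with linear
growth, and `C̄(q) → 0` as `q → 0⁺` and `C̄(q)/q → 0` as `q → ∞`, then the risk-neutral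
expected discounted pool value
`G(σ) = ∫ C̄(p₀·exp(−σ²T/2 + σ√T·z)) dγ(z)` tends to `0` as `σ → ∞`. -/
theorem expected_pool_value_tendsto_zero (T p₀ : ℝ) (hT : 0 < T) (hp₀ : 0 < p₀)
    (C : ℝ → ℝ) (hcont : ContinuousOn C (Set.Ioi (0 : ℝ)))
    (hnn : ∀ q : ℝ, 0 < q → 0 ≤ C q)
    (hmono : MonotoneOn C (Set.Ioi (0 : ℝ)))
    (A B : ℝ) (hA : 0 ≤ A) (hB : 0 ≤ B)
    (hgrowth : ∀ q : ℝ, 0 < q → C q ≤ A + B * q)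
    (hlim0 : Tendsto C (nhdsWithin 0 (Set.Ioi (0 : ℝ))) (nhds 0))
    (hliminf : Tendsto (fun q => C q / q) atTop (nhds 0)) :
    Tendsto
      (fun σ : ℝ =>
        ∫ z, C (p₀ * Real.exp (-σ ^ 2 * T / 2 + σ * Real.sqrt T * z))
          ∂(gaussianReal 0 1))
      atTop (nhds 0) := by
  have hqpos : ∀ σ z : ℝ, 0 < p₀ * Real.exp (-σ ^ 2 * T / 2 + σ * Real.sqrt T * z) :=
    fun σ z => mul_pos hp₀ (Real.exp_pos _)
  have Gnn : ∀ σ : ℝ, 0 ≤ ∫ z, C (p₀ * Real.exp (-σ ^ 2 * T / 2 + σ * Real.sqrt T * z))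
      ∂(gaussianReal 0 1) := fun σ => integral_nonneg fun z => hnn _ (hqpos σ z)
  rw [NormedAddCommGroup.tendsto_nhds_zero]
  intro ε hε
  set ε' := ε / (2 * (1 + p₀)) with hε'def
  have hε' : 0 < ε' := by positivity
  -- small-q bound
  have h0 := hlim0.eventually_lt_const hε'
  rw [eventually_nhdsWithin_iff, Metric.eventually_nhds_iff] at h0
  obtain ⟨δ, hδpos, hδ⟩ := h0
  -- large-q bound
  obtain ⟨M₀, hM₀⟩ := (hliminf.eventually_lt_const hε').exists_forall_of_atTop
  set M : ℝ := max M₀ 1 with hMdef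
  have hM1 : (1 : ℝ) ≤ M := le_max_right _ _
  have hMbound : ∀ q : ℝ, M ≤ q → C q ≤ ε' * q := by
    intro q hq
    have hq0 : 0 < q := lt_of_lt_of_le (lt_of_lt_of_le one_pos hM1) hq
    have h := hM₀ q (le_trans (le_max_left _ _) hq)
    rw [div_lt_iff₀ hq0] at h
    linarith
  set K : ℝ := A + B * M with hKdef
  have hK : 0 ≤ K := add_nonneg hA (mul_nonneg hB (by linarith))
  have hsδ : 0 < Real.sqrt δ := Real.sqrt_pos.mpr hδpos
  have hKd : 0 ≤ K / Real.sqrt δ := div_nonneg hK hsδ.le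
  set R : ℝ := K / Real.sqrt δ * Real.sqrt p₀ with hRdef
  have hR : 0 ≤ R := mul_nonneg hKd (Real.sqrt_nonneg _)
  -- pointwise bound
  have hbound : ∀ x : ℝ, 0 < x →
      C x ≤ ε' + ε' * x + K / Real.sqrt δ * Real.sqrt x := by
    intro x hx
    have t1 : 0 ≤ ε' * x := by positivity
    have t2 : 0 ≤ K / Real.sqrt δ * Real.sqrt x := mul_nonneg hKd (Real.sqrt_nonneg _)
    rcases lt_or_ge x δ with h1 | h1
    · have hC : C x < ε' := hδ (by rw [Real.dist_eq, sub_zero, abs_of_pos hx]; exact h1) hx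
      linarith
    · rcases le_or_gt x M with h2 | h2
      · have hBx : B * x ≤ B * M := mul_le_mul_of_nonneg_left h2 hB
        have hCx : C x ≤ K := le_trans (hgrowth x hx) (by rw [hKdef]; linarith)
        have hs : Real.sqrt δ ≤ Real.sqrt x := Real.sqrt_le_sqrt h1
        have hKs : K ≤ K / Real.sqrt δ * Real.sqrt x := by
          rw [div_mul_eq_mul_div, le_div_iff₀ hsδ]
          exact mul_le_mul_of_nonneg_left hs hK
        linarith
      · have := hMbound x h2.le
        linarith
  -- sqrt of the price
  have hsq : ∀ s : ℝ, Real.sqrt (p₀ * Real.exp s) = Real.sqrt p₀ * Real.exp (s / 2) := by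
    intro s
    rw [Real.sqrt_mul hp₀.le]
    congr 1
    rw [show Real.exp s = Real.exp (s / 2) ^ 2 by rw [sq, ← Real.exp_add, add_halves],
      Real.sqrt_sq (Real.exp_nonneg _)]
  -- the key integral bound, for every σ
  have key : ∀ σ : ℝ,
      (∫ z, C (p₀ * Real.exp (-σ ^ 2 * T / 2 + σ * Real.sqrt T * z)) ∂(gaussianReal 0 1))
        ≤ ε' + ε' * p₀ + R * Real.exp (-(σ ^ 2 * T) / 8) := by
    intro σ
    set c : ℝ := σ * Real.sqrt T with hcdef
    have hc2 : c ^ 2 = σ ^ 2 * T := by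
      rw [hcdef, mul_pow, Real.sq_sqrt hT.le]
    set g : ℝ → ℝ := fun z =>
      (ε' + ε' * p₀ * Real.exp (c * z + -(σ ^ 2 * T) / 2))
        + R * Real.exp (c / 2 * z + -(σ ^ 2 * T) / 4) with hgdef
    have i2 : Integrable (fun z : ℝ => ε' * p₀ * Real.exp (c * z + -(σ ^ 2 * T) / 2))
        (gaussianReal 0 1) := (gauss_mgf_int c (-(σ ^ 2 * T) / 2)).const_mul (ε' * p₀)
    have i3 : Integrable (fun z : ℝ => R * Real.exp (c / 2 * z + -(σ ^ 2 * T) / 4))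
        (gaussianReal 0 1) := (gauss_mgf_int (c / 2) (-(σ ^ 2 * T) / 4)).const_mul R
    have i1 : Integrable (fun z : ℝ => ε' + ε' * p₀ * Real.exp (c * z + -(σ ^ 2 * T) / 2))
        (gaussianReal 0 1) := (integrable_const ε').add i2
    have hgint : Integrable g (gaussianReal 0 1) := i1.add i3
    have hle : ∀ z : ℝ,
        C (p₀ * Real.exp (-σ ^ 2 * T / 2 + σ * Real.sqrt T * z)) ≤ g z := by
      intro z
      have h := hbound _ (hqpos σ z)
      have e1 : -σ ^ 2 * T / 2 + σ * Real.sqrt T * z = c * z + -(σ ^ 2 * T) / 2 := by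
        rw [hcdef]; ring
      have e2 : Real.sqrt (p₀ * Real.exp (-σ ^ 2 * T / 2 + σ * Real.sqrt T * z))
          = Real.sqrt p₀ * Real.exp (c / 2 * z + -(σ ^ 2 * T) / 4) := by
        rw [hsq]
        congr 1
        rw [hcdef]; ring
      rw [e2] at h
      rw [hgdef]
      simp only
      rw [e1] at h ⊢
      nlinarith [Real.exp_pos (c * z + -(σ ^ 2 * T) / 2), Real.sqrt_nonneg p₀,
        Real.exp_pos (c / 2 * z + -(σ ^ 2 * T) / 4)]
    calc (∫ z, C (p₀ * Real.exp (-σ ^ 2 * T / 2 + σ * Real.sqrt T * z)) ∂(gaussianReal 0 1))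
        ≤ ∫ z, g z ∂(gaussianReal 0 1) :=
          integral_mono_of_nonneg (Filter.Eventually.of_forall fun z => hnn _ (hqpos σ z))
            hgint (Filter.Eventually.of_forall hle)
      _ = ε' + ε' * p₀ + R * Real.exp (-(σ ^ 2 * T) / 8) := by
          simp only [hgdef]
          rw [integral_add i1 i3, integral_add (integrable_const ε') i2,
            integral_const, integral_const_mul, integral_const_mul, gauss_mgf, gauss_mgf]
          have e3 : c ^ 2 / 2 + -(σ ^ 2 * T) / 2 = 0 := by rw [hc2]; ring
          have e4 : (c / 2) ^ 2 / 2 + -(σ ^ 2 * T) / 4 = -(σ ^ 2 * T) / 8 := by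
            rw [div_pow, hc2]; ring
          rw [e3, e4, Real.exp_zero]
          simp
  -- conclusion
  have hhalf : ε' + ε' * p₀ = ε / 2 := by
    rw [hε'def]
    field_simp
  have htend : Tendsto (fun σ : ℝ => R * Real.exp (-(σ ^ 2 * T) / 8)) atTop (nhds 0) := by
    have h1 : Tendsto (fun σ : ℝ => σ ^ 2) atTop atTop :=
      tendsto_pow_atTop two_ne_zero
    have h2 : Tendsto (fun σ : ℝ => σ ^ 2 * (T / 8)) atTop atTop :=
      h1.atTop_mul_const (by positivity)
    have h3 : Tendsto (fun σ : ℝ => -(σ ^ 2 * T) / 8) atTop atBot := by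
      have := tendsto_neg_atTop_atBot.comp h2
      refine this.congr fun σ => ?_
      simp only [Function.comp_apply]
      ring
    have h4 := Real.tendsto_exp_atBot.comp h3
    have h5 : Tendsto (fun σ : ℝ => R * Real.exp (-(σ ^ 2 * T) / 8)) atTop (nhds (R * 0)) :=
      (h4.const_mul R)
    rwa [mul_zero] at h5
  filter_upwards [htend.eventually_lt_const (show (0 : ℝ) < ε / 2 by positivity)] with σ hσ
  rw [Real.norm_eq_abs, abs_of_nonneg (Gnn σ)]
  have := key σ
  linarith
end
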